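/- Suppose θ > 0, G has no 0-cycles, and T is an SPT of G rooted at s containing the edge e₀. Let T' be any SPT of G' rooted at s, and let T* be the spanning tree obtained from T' by repeatedly merging pairs of linked branches having the same δ value (merging linked branches B₁ and B₂ via a T-edge (u₁, u₂) with u₁ ∈ B₁ and u₂ ∈ B₂, so that u₂ is the miniroot of B₂, means changing the parent of u₂ in the current tree to u₁) until no two linked branches have the same δ value. Then T* is an SPT of G' and T* has the minimal number of edge changes with respect to T among all SPTs of G', where an edge of a spanning tree of G' counts as changed if it is not an edge of T or if it equals the weight-modified edge e₀. -/

import Mathlib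

namespace DynSPT

variable {V : Type*}

/-- The list of consecutive edges of a path given as a list of vertices. -/
def edgeList (l : List V) : List (V × V) := l.zip l.tail

/-- The length of a path with respect to the weight function `ω`. -/
def len (ω : V → V → ℝ) (l : List V) : ℝ :=
  ((edgeList l).map fun p => ω p.1 p.2).sum

/-- `l` is a path in the directed graph with edge relation `E`. -/
def IsWalk (E : V → V → Prop) (l : List V) : Prop := l ≠ [] ∧ l.Chain' E

/-- `l` is a path from `u` to `v` in the directed graph with edge relation `E`. -/
def IsWalkFrom (E : V → V → Prop) (l : List V) (u v : V) : Prop :=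
  IsWalk E l ∧ l.head? = some u ∧ l.getLast? = some v

/-- The path `l` traverses the edge `e`. -/
def Traverses (l : List V) (e : V × V) : Prop := e ∈ edgeList l

/-- `l` is a cycle: a path with at least one edge whose first and last vertices agree. -/
def IsCycle (E : V → V → Prop) (l : List V) : Prop :=
  ∃ v, IsWalkFrom E l v v ∧ 2 ≤ l.length

/-- The weighted directed graph `(E, ω)` has a negative cycle. -/
def HasNegCycle (E : V → V → Prop) (ω : V → V → ℝ) : Prop :=
  ∃ l, IsCycle E l ∧ len ω l < 0

/-- The weighted directed graph `(E, ω)` has a zero-length cycle. -/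
def HasZeroCycle (E : V → V → Prop) (ω : V → V → ℝ) : Prop :=
  ∃ l, IsCycle E l ∧ len ω l = 0

/-- The distance from `s` to `v`: the infimum of the lengths of paths from `s` to `v`. -/
noncomputable def dist (E : V → V → Prop) (ω : V → V → ℝ) (s v : V) : ℝ :=
  sInf {L : ℝ | ∃ l, IsWalkFrom E l s v ∧ len ω l = L}

/-- A spanning tree of the directed graph `E` rooted at `s`, recorded by the parent
function together with, for every vertex `v`, the tree path from `s` to `v`. -/
structure RootedTree (E : V → V → Prop) (s : V) where
  parent : V → V
  path : V → List V
  path_root : path s = [s]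
  parent_edge : ∀ v, v ≠ s → E (parent v) v
  path_eq : ∀ v, v ≠ s → path v = path (parent v) ++ [v]
  path_isWalkFrom : ∀ v, IsWalkFrom E (path v) s v

/-- `(a, b)` is an edge of the rooted tree `T`. -/
def RootedTree.IsEdge {E : V → V → Prop} {s : V} (T : RootedTree E s) (a b : V) : Prop :=
  b ≠ s ∧ T.parent b = a

/-- `T` is a shortest-path tree for the weight function `ω`:
every tree path from the root is a shortest path. -/
def IsSPT {E : V → V → Prop} {s : V} (ω : V → V → ℝ) (T : RootedTree E s) : Prop :=
  ∀ v, len ω (T.path v) = dist E ω s v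

/-- The tree edge of `Th` into `v` is kept when forming `Th`-branches: it is an
edge of the old tree `T` and is not the modified edge `(x₀, y₀)`. -/
def Kept {E : V → V → Prop} {s : V} (T Th : RootedTree E s) (x₀ y₀ v : V) : Prop :=
  v ≠ s ∧ T.IsEdge (Th.parent v) v ∧ (Th.parent v, v) ≠ (x₀, y₀)

/-- `v` belongs to the `Th`-branch with miniroot `m`: `m` is an ancestor of `v` in `Th`
and every tree edge on the segment of the tree path from `m` to `v` is kept. -/
def InBranch {E : V → V → Prop} {s : V} (T Th : RootedTree E s) (x₀ y₀ m v : V) : Prop :=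
  ∃ l, Th.path v = Th.path m ++ l ∧ ∀ w ∈ l, Kept T Th x₀ y₀ w

/-- `m` is the miniroot of a `Th`-branch: the tree edge of `Th` into `m` is not kept
(in particular this holds for the root `s`). -/
def IsMiniroot {E : V → V → Prop} {s : V} (T Th : RootedTree E s) (x₀ y₀ m : V) : Prop :=
  ¬ Kept T Th x₀ y₀ m

/-- One merge step: two distinct linked branches of `T₁` (with miniroots `m₁`, `m₂`,
linked via the `T`-edge `(u₁, m₂)` with `u₁` in the branch of `m₁`) having the same
`δ` value are merged by changing the parent of `m₂` to `u₁`. -/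
def MergeStep {E : V → V → Prop} {s : V} [DecidableEq V] (ω ω' : V → V → ℝ)
    (T : RootedTree E s) (x₀ y₀ : V) (T₁ T₂ : RootedTree E s) : Prop :=
  ∃ m₁ m₂ u₁, IsMiniroot T T₁ x₀ y₀ m₁ ∧ IsMiniroot T T₁ x₀ y₀ m₂ ∧ m₁ ≠ m₂ ∧
    InBranch T T₁ x₀ y₀ m₁ u₁ ∧ T.IsEdge u₁ m₂ ∧
    dist E ω' s m₁ - dist E ω s m₁ = dist E ω' s m₂ - dist E ω s m₂ ∧
    T₂.parent = Function.update T₁.parent m₂ u₁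

/-- No two distinct linked branches of `T₁` have the same `δ` value. -/
def NoMergeable {E : V → V → Prop} {s : V} (ω ω' : V → V → ℝ)
    (T : RootedTree E s) (x₀ y₀ : V) (T₁ : RootedTree E s) : Prop :=
  ¬ ∃ m₁ m₂ u₁ u₂, IsMiniroot T T₁ x₀ y₀ m₁ ∧ IsMiniroot T T₁ x₀ y₀ m₂ ∧ m₁ ≠ m₂ ∧
      dist E ω' s m₁ - dist E ω s m₁ = dist E ω' s m₂ - dist E ω s m₂ ∧
      T.IsEdge u₁ u₂ ∧
      ((InBranch T T₁ x₀ y₀ m₁ u₁ ∧ InBranch T T₁ x₀ y₀ m₂ u₂) ∨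
        (InBranch T T₁ x₀ y₀ m₂ u₁ ∧ InBranch T T₁ x₀ y₀ m₁ u₂))

/-- The number of changed edges of a spanning tree `Th` of the updated graph with
respect to the old SPT `T`: a tree edge counts as changed if it is not an edge of `T`
or if it is the weight-modified edge `(x₀, y₀)`. -/
noncomputable def changedCount {E : V → V → Prop} {s : V} (T Th : RootedTree E s)
    (x₀ y₀ : V) : ℕ :=
  Set.ncard {v | v ≠ s ∧ (¬ T.IsEdge (Th.parent v) v ∨ (Th.parent v, v) = (x₀, y₀))}

section Lemmas

variable {E : V → V → Prop} {s x₀ y₀ : V} {ω ω' : V → V → ℝ}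

lemma len_nil (ω : V → V → ℝ) : len ω ([] : List V) = 0 := rfl

lemma len_single (ω : V → V → ℝ) (x : V) : len ω [x] = 0 := rfl

lemma edgeList_cons_cons (a b : V) (l : List V) :
    edgeList (a :: b :: l) = (a, b) :: edgeList (b :: l) := rfl

lemma len_cons_cons (a b : V) (l : List V) :
    len ω (a :: b :: l) = ω a b + len ω (b :: l) := by
  simp [len, edgeList_cons_cons]

lemma edgeList_split (xs : List V) (x : V) (ys : List V) :
    edgeList (xs ++ x :: ys) = edgeList (xs ++ [x]) ++ edgeList (x :: ys) := by
  induction xs with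
  | nil => simp [edgeList]
  | cons a xs ih =>
    cases xs with
    | nil => simp [edgeList]
    | cons b xs' =>
      have : edgeList (a :: (b :: xs') ++ x :: ys)
          = (a, b) :: edgeList ((b :: xs') ++ x :: ys) := rfl
      rw [this, ih]
      rfl

lemma len_split (xs : List V) (x : V) (ys : List V) :
    len ω (xs ++ x :: ys) = len ω (xs ++ [x]) + len ω (x :: ys) := by
  unfold len
  rw [edgeList_split, List.map_append, List.sum_append]

lemma len_concat {l : List V} {u : V} (h : l.getLast? = some u) (v : V) :
    len ω (l ++ [v]) = len ω l + ω u v := by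
  obtain ⟨l', rfl⟩ := List.getLast?_eq_some_iff.1 h
  calc len ω ((l' ++ [u]) ++ [v]) = len ω (l' ++ u :: [v]) := by simp
    _ = len ω (l' ++ [u]) + len ω [u, v] := len_split _ _ _
    _ = len ω (l' ++ [u]) + ω u v := by rw [len_cons_cons, len_single]; ring

lemma IsWalkFrom.concat {l : List V} {u v : V} (h : IsWalkFrom E l s u) (he : E u v) :
    IsWalkFrom E (l ++ [v]) s v := by
  obtain ⟨⟨hne, hch⟩, hh, hl⟩ := h
  refine ⟨⟨by simp, ?_⟩, ?_, List.getLast?_concat⟩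
  · refine List.isChain_append.2 ⟨hch, List.isChain_singleton _, ?_⟩
    intro x hx y hy
    simp only [List.head?_cons, Option.mem_def, Option.some_inj] at hy
    subst hy
    rw [Option.mem_def, hl] at hx
    exact Option.some_inj.1 hx ▸ he
  · cases l with
    | nil => exact absurd rfl hne
    | cons a t => simpa using hh

lemma cycle_nonneg (hG : ¬ HasNegCycle E ω) {l : List V} (hc : IsCycle E l) :
    0 ≤ len ω l := by
  by_contra h
  exact hG ⟨l, hc, by linarith⟩

lemma exists_dup_split {l : List V} (h : ¬ l.Nodup) :
    ∃ (a : V) (l₁ l₂ l₃ : List V), l = l₁ ++ a :: (l₂ ++ a :: l₃) := by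
  induction l with
  | nil => simp at h
  | cons x xs ih =>
    by_cases hx : x ∈ xs
    · obtain ⟨l₂, l₃, rfl⟩ := List.append_of_mem hx
      exact ⟨x, [], l₂, l₃, by simp⟩
    · have hxs : ¬ xs.Nodup := by
        intro hnd
        exact h (List.nodup_cons.2 ⟨hx, hnd⟩)
      obtain ⟨a, l₁, l₂, l₃, rfl⟩ := ih hxs
      exact ⟨a, x :: l₁, l₂, l₃, rfl⟩

lemma sum_ge_neg {M : ℝ} : ∀ (L : List ℝ), (∀ x ∈ L, -M ≤ x) → -((L.length : ℝ) * M) ≤ L.sum := by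
  intro L
  induction L with
  | nil => simp
  | cons a t ih =>
    intro h
    have h1 := h a (List.mem_cons_self)
    have h2 := ih fun x hx => h x (List.mem_cons_of_mem _ hx)
    simp only [List.sum_cons, List.length_cons]
    push_cast
    linarith

lemma len_lb [Fintype V] (hG : ¬ HasNegCycle E ω) :
    ∀ (l : List V), l.Chain' E →
      -((Fintype.card V : ℝ) * (∑ p : V × V, |ω p.1 p.2|)) ≤ len ω l := by
  classical
  set M := ∑ p : V × V, |ω p.1 p.2| with hM
  have hM0 : 0 ≤ M := Finset.sum_nonneg fun _ _ => abs_nonneg _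
  have hcard : (0:ℝ) ≤ (Fintype.card V : ℝ) := Nat.cast_nonneg _
  suffices H : ∀ (n : ℕ) (l : List V), l.length ≤ n → l.Chain' E →
      -((Fintype.card V : ℝ) * M) ≤ len ω l by
    intro l hch; exact H l.length l le_rfl hch
  intro n
  induction n with
  | zero =>
    intro l hl hch
    have : l = [] := List.length_eq_zero_iff.1 (Nat.le_zero.1 hl)
    subst this
    rw [len_nil]
    nlinarith
  | succ n ih =>
    intro l hl hch
    by_cases hnd : l.Nodup
    · have hlen : (edgeList l).length ≤ Fintype.card V := by
        have h1 : l.length ≤ Fintype.card V := List.Nodup.length_le_card hnd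
        have h2 : (edgeList l).length ≤ l.length := by
          simp only [edgeList, List.length_zip]
          omega
        omega
      have hterm : ∀ x ∈ (edgeList l).map (fun p => ω p.1 p.2), -M ≤ x := by
        intro x hx
        simp only [List.mem_map] at hx
        obtain ⟨p, _, rfl⟩ := hx
        have h3 : |ω p.1 p.2| ≤ M :=
          Finset.single_le_sum (f := fun q : V × V => |ω q.1 q.2|)
            (fun _ _ => abs_nonneg _) (Finset.mem_univ p)
        have h4 := neg_abs_le (ω p.1 p.2)
        linarith
      have h5 := sum_ge_neg _ hterm
      rw [List.length_map] at h5
      have h6 : ((edgeList l).length : ℝ) * M ≤ (Fintype.card V : ℝ) * M := by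
        apply mul_le_mul_of_nonneg_right _ hM0
        exact_mod_cast hlen
      unfold len
      linarith
    · obtain ⟨a, l₁, l₂, l₃, rfl⟩ := exists_dup_split hnd
      obtain ⟨hc1, hc2, hlink⟩ := List.isChain_append.1 hch
      have h2 : a :: (l₂ ++ a :: l₃) = (a :: l₂) ++ (a :: l₃) := by simp
      rw [h2] at hc2
      obtain ⟨hc21, hc22, hlink2⟩ := List.isChain_append.1 hc2
      have hcnew : (l₁ ++ a :: l₃).Chain' E := by
        refine List.isChain_append.2 ⟨hc1, hc22, ?_⟩
        intro x hx y hy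
        exact hlink x hx y (by simpa using hy)
      have hccyc : ((a :: l₂) ++ [a]).Chain' E := by
        refine List.isChain_append.2 ⟨hc21, List.isChain_singleton _, ?_⟩
        intro x hx y hy
        simp only [List.head?_cons, Option.mem_def, Option.some_inj] at hy
        subst hy
        exact hlink2 x hx a (by simp)
      have hcyc : IsCycle E ((a :: l₂) ++ [a]) :=
        ⟨a, ⟨⟨by simp, hccyc⟩, by simp, List.getLast?_concat⟩, by simp⟩
      have hge := cycle_nonneg hG hcyc
      have hlsplit : len ω (l₁ ++ a :: (l₂ ++ a :: l₃))
          = len ω (l₁ ++ [a]) + len ω ((a :: l₂) ++ [a]) + len ω (a :: l₃) := by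
        rw [len_split l₁ a (l₂ ++ a :: l₃)]
        have h3 : len ω (a :: (l₂ ++ a :: l₃)) = len ω ((a :: l₂) ++ a :: l₃) := by
          rw [← List.cons_append]
        rw [h3, len_split (a :: l₂) a l₃]
        ring
      have hnewsplit : len ω (l₁ ++ a :: l₃) = len ω (l₁ ++ [a]) + len ω (a :: l₃) :=
        len_split _ _ _
      have hlen2 : (l₁ ++ a :: l₃).length ≤ n := by
        simp only [List.length_append, List.length_cons] at hl ⊢
        omega
      have h7 := ih (l₁ ++ a :: l₃) hlen2 hcnew
      rw [hlsplit]
      rw [hnewsplit] at h7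
      linarith

lemma dist_bddBelow [Fintype V] (hG : ¬ HasNegCycle E ω) (v : V) :
    BddBelow {L : ℝ | ∃ l, IsWalkFrom E l s v ∧ len ω l = L} := by
  refine ⟨-((Fintype.card V : ℝ) * (∑ p : V × V, |ω p.1 p.2|)), ?_⟩
  rintro L ⟨l, ⟨⟨_, hch⟩, _, _⟩, rfl⟩
  exact len_lb hG l hch

lemma dist_set_nonempty (hreach : ∀ v, ∃ l, IsWalkFrom E l s v) (v : V) :
    {L : ℝ | ∃ l, IsWalkFrom E l s v ∧ len ω l = L}.Nonempty := by
  obtain ⟨l, hl⟩ := hreach v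
  exact ⟨len ω l, l, hl, rfl⟩

lemma dist_le_len [Fintype V] (hG : ¬ HasNegCycle E ω) {l : List V} {v : V}
    (hw : IsWalkFrom E l s v) : dist E ω s v ≤ len ω l :=
  csInf_le (dist_bddBelow hG v) ⟨l, hw, rfl⟩

lemma dist_triangle [Fintype V] (hG : ¬ HasNegCycle E ω)
    (hreach : ∀ v, ∃ l, IsWalkFrom E l s v) {u v : V} (he : E u v) :
    dist E ω s v ≤ dist E ω s u + ω u v := by
  have key : ∀ L ∈ {L : ℝ | ∃ l, IsWalkFrom E l s u ∧ len ω l = L},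
      dist E ω s v - ω u v ≤ L := by
    rintro L ⟨l, hw, rfl⟩
    have h1 : dist E ω s v ≤ len ω (l ++ [v]) := dist_le_len hG (hw.concat he)
    have h2 : len ω (l ++ [v]) = len ω l + ω u v := len_concat hw.2.2 v
    linarith
  have := le_csInf (dist_set_nonempty hreach u) key
  have hd : dist E ω s v - ω u v ≤ dist E ω s u := this
  linarith

lemma walk_single (s : V) : IsWalkFrom E [s] s s :=
  ⟨⟨by simp, List.isChain_singleton _⟩, rfl, rfl⟩

lemma dist_source [Fintype V] (hG : ¬ HasNegCycle E ω) : dist E ω s s = 0 := by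
  apply le_antisymm
  · have := csInf_le (dist_bddBelow hG s) (⟨[s], walk_single s, len_single ω s⟩ :
      (0:ℝ) ∈ {L : ℝ | ∃ l, IsWalkFrom E l s s ∧ len ω l = L})
    exact this
  · refine le_csInf ⟨0, [s], walk_single s, len_single ω s⟩ ?_
    rintro L ⟨l, hw, rfl⟩
    cases l with
    | nil => exact absurd rfl hw.1.1
    | cons x t =>
      cases t with
      | nil => rw [len_single]
      | cons y t' =>
        refine cycle_nonneg hG ⟨s, hw, ?_⟩
        simp

lemma len_mono (hle : ∀ a b, ω a b ≤ ω' a b) (l : List V) : len ω l ≤ len ω' l := by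
  unfold len
  apply List.sum_le_sum
  intro p _
  exact hle p.1 p.2

lemma dist_mono [Fintype V] (hG : ¬ HasNegCycle E ω) (hle : ∀ a b, ω a b ≤ ω' a b)
    (hreach : ∀ v, ∃ l, IsWalkFrom E l s v) (v : V) :
    dist E ω s v ≤ dist E ω' s v := by
  refine le_csInf (dist_set_nonempty hreach v) ?_
  rintro L ⟨l, hw, rfl⟩
  exact le_trans (dist_le_len hG hw) (len_mono hle l)

section TreeLemmas

variable {T Th T₁ T₂ : RootedTree E s}

lemma path_last (Th : RootedTree E s) (v : V) : (Th.path v).getLast? = some v :=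
  (Th.path_isWalkFrom v).2.2

lemma path_ne_nil (Th : RootedTree E s) (v : V) : Th.path v ≠ [] :=
  (Th.path_isWalkFrom v).1.1

lemma path_len_pos (Th : RootedTree E s) (v : V) : 1 ≤ (Th.path v).length :=
  List.length_pos_iff.2 (path_ne_nil Th v)

lemma eq_of_path_eq {u v : V} (h : Th.path u = Th.path v) : u = v := by
  have h1 := path_last Th u
  have h2 := path_last Th v
  rw [h] at h1
  rw [h1] at h2
  exact Option.some_inj.1 h2

lemma path_parent_length {v : V} (hv : v ≠ s) :
    (Th.path (Th.parent v)).length + 1 = (Th.path v).length := by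
  rw [Th.path_eq v hv]
  simp

/-- Induction principle along tree parents. -/
lemma tree_induction (Th : RootedTree E s) (Q : V → Prop) (hs : Q s)
    (hstep : ∀ v, v ≠ s → Q (Th.parent v) → Q v) : ∀ v, Q v := by
  suffices H : ∀ n v, (Th.path v).length ≤ n → Q v by
    intro v; exact H _ v le_rfl
  intro n
  induction n with
  | zero => intro v hv; have := path_len_pos Th v; omega
  | succ n ih =>
    intro v hv
    by_cases hvs : v = s
    · subst hvs; exact hs
    · refine hstep v hvs (ih _ ?_)
      have := path_parent_length (Th := Th) hvs
      omega

lemma path_prefix_of_mem : ∀ {w u : V}, u ∈ Th.path w → ∃ r, Th.path w = Th.path u ++ r := by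
  suffices H : ∀ (n : ℕ) (w u : V), (Th.path w).length ≤ n → u ∈ Th.path w →
      ∃ r, Th.path w = Th.path u ++ r by
    intro w u h; exact H _ w u le_rfl h
  intro n
  induction n with
  | zero => intro w u hl _; have := path_len_pos Th w; omega
  | succ n ih =>
    intro w u hl hmem
    by_cases hws : w = s
    · subst hws
      rw [Th.path_root] at hmem ⊢
      simp only [List.mem_singleton] at hmem
      subst hmem
      exact ⟨[], by rw [Th.path_root]; simp⟩
    · rw [Th.path_eq w hws] at hmem
      rcases List.mem_append.1 hmem with h | h
      · obtain ⟨r, hr⟩ := ih (Th.parent w) u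
          (by have := path_parent_length (Th := Th) hws; omega) h
        exact ⟨r ++ [w], by rw [Th.path_eq w hws, hr, List.append_assoc]⟩
      · simp only [List.mem_singleton] at h
        subst h
        exact ⟨[], by simp⟩

lemma path_nodup (Th : RootedTree E s) : ∀ v, (Th.path v).Nodup := by
  refine tree_induction Th _ (by rw [Th.path_root]; simp) ?_
  intro v hv ih
  rw [Th.path_eq v hv]
  have hnotmem : v ∉ Th.path (Th.parent v) := by
    intro hmem
    obtain ⟨r, hr⟩ := path_prefix_of_mem hmem
    have h1 : (Th.path (Th.parent v)).length + 1 = (Th.path v).length :=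
      path_parent_length hv
    have h2 := congrArg List.length hr
    simp only [List.length_append] at h2
    omega
  simp [List.nodup_append, ih, hnotmem]
  intro a ha hav; exact hnotmem (hav ▸ ha)

lemma len_path_parent (ω : V → V → ℝ) {v : V} (hv : v ≠ s) :
    len ω (Th.path v) = len ω (Th.path (Th.parent v)) + ω (Th.parent v) v := by
  rw [Th.path_eq v hv]
  exact len_concat (path_last Th (Th.parent v)) v

/-- In an SPT, every tree edge is tight. -/
lemma spt_edge_eq {ω : V → V → ℝ} (hTh : IsSPT ω Th) {v : V} (hv : v ≠ s) :
    dist E ω s v = dist E ω s (Th.parent v) + ω (Th.parent v) v := by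
  have h1 := hTh v
  have h2 := hTh (Th.parent v)
  have h3 := len_path_parent (Th := Th) ω hv
  linarith

/-- If every tree edge is tight then the tree is an SPT. -/
lemma isSPT_of_tight [Fintype V] {ω : V → V → ℝ} (hG : ¬ HasNegCycle E ω)
    (htight : ∀ v, v ≠ s → dist E ω s v = dist E ω s (Th.parent v) + ω (Th.parent v) v) :
    IsSPT ω Th := by
  refine tree_induction Th _ ?_ ?_
  · rw [Th.path_root, len_single, dist_source hG]
  · intro v hv ih
    rw [len_path_parent (Th := Th) ω hv, ih, htight v hv]

lemma kept_parent_eq {v : V} (h : Kept T Th x₀ y₀ v) : T.parent v = Th.parent v :=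
  h.2.1.2

lemma inBranch_refl (m : V) : InBranch T Th x₀ y₀ m m := ⟨[], by simp, by simp⟩

lemma inBranch_step {m v : V} (hk : Kept T Th x₀ y₀ v)
    (hb : InBranch T Th x₀ y₀ m (Th.parent v)) : InBranch T Th x₀ y₀ m v := by
  obtain ⟨l, hpath, hkept⟩ := hb
  refine ⟨l ++ [v], ?_, ?_⟩
  · rw [Th.path_eq v hk.1, hpath, List.append_assoc]
  · intro w hw
    rcases List.mem_append.1 hw with h | h
    · exact hkept w h
    · simp only [List.mem_singleton] at h
      subst h
      exact hk

lemma inBranch_cases {m v : V} (hb : InBranch T Th x₀ y₀ m v) :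
    v = m ∨ (Kept T Th x₀ y₀ v ∧ InBranch T Th x₀ y₀ m (Th.parent v)) := by
  obtain ⟨l, hpath, hkept⟩ := hb
  rcases List.eq_nil_or_concat l with rfl | ⟨l', w, rfl⟩
  · left
    exact eq_of_path_eq (by simpa using hpath)
  · simp only [List.concat_eq_append] at hpath hkept
    have hwv : w = v := by
      have h1 := path_last Th v
      rw [hpath, ← List.append_assoc, List.getLast?_concat] at h1
      exact Option.some_inj.1 h1
    subst hwv
    have hkv : Kept T Th x₀ y₀ w := hkept w (by simp)
    right
    refine ⟨hkv, l', ?_, fun u hu => hkept u (by simp [hu])⟩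
    have h2 : Th.path (Th.parent w) ++ [w] = (Th.path m ++ l') ++ [w] := by
      rw [← Th.path_eq w hkv.1, hpath, List.append_assoc]
    exact List.append_cancel_right h2

lemma inBranch_trans {m m' v : V} (h1 : InBranch T Th x₀ y₀ m m')
    (h2 : InBranch T Th x₀ y₀ m' v) : InBranch T Th x₀ y₀ m v := by
  obtain ⟨l₁, hp1, hk1⟩ := h1
  obtain ⟨l₂, hp2, hk2⟩ := h2
  refine ⟨l₁ ++ l₂, by rw [hp2, hp1, List.append_assoc], ?_⟩
  intro w hw
  rcases List.mem_append.1 hw with h | h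
  · exact hk1 w h
  · exact hk2 w h

lemma paths_eq_of_parent_eq (h : T₁.parent = T₂.parent) : ∀ v, T₁.path v = T₂.path v := by
  suffices H : ∀ n v, (T₁.path v).length ≤ n → T₁.path v = T₂.path v by
    intro v; exact H _ v le_rfl
  intro n
  induction n with
  | zero => intro v hv; have := path_len_pos T₁ v; omega
  | succ n ih =>
    intro v hv
    by_cases hvs : v = s
    · subst hvs; rw [T₁.path_root, T₂.path_root]
    · rw [T₁.path_eq v hvs, T₂.path_eq v hvs, ← h,
        ih _ (by have := path_parent_length (Th := T₁) hvs; omega)]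

lemma inBranch_update [DecidableEq V] {z u : V}
    (hpar : T₂.parent = Function.update T₁.parent z u) (hz : ¬ Kept T T₁ x₀ y₀ z) :
    ∀ {m v}, InBranch T T₁ x₀ y₀ m v → InBranch T T₂ x₀ y₀ m v := by
  suffices H : ∀ n m v, (T₁.path v).length ≤ n → InBranch T T₁ x₀ y₀ m v →
      InBranch T T₂ x₀ y₀ m v by
    intro m v h; exact H _ m v le_rfl h
  intro n
  induction n with
  | zero => intro m v hv _; have := path_len_pos T₁ v; omega
  | succ n ih =>
    intro m v hv hb
    rcases inBranch_cases hb with rfl | ⟨hkv, hbp⟩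
    · exact inBranch_refl v
    · have hvz : v ≠ z := fun h => hz (h ▸ hkv)
      have hp2 : T₂.parent v = T₁.parent v := by
        rw [hpar, Function.update_of_ne hvz]
      have hkv2 : Kept T T₂ x₀ y₀ v := by
        refine ⟨hkv.1, ?_, ?_⟩
        · rw [hp2]; exact hkv.2.1
        · rw [hp2]; exact hkv.2.2
      have hbp2 : InBranch T T₂ x₀ y₀ m (T₂.parent v) := by
        rw [hp2]
        exact ih m _ (by have := path_parent_length (Th := T₁) hkv.1; omega) hbp
      exact inBranch_step hkv2 hbp2

lemma miniroot_exists : ∀ v, ∃ m, IsMiniroot T Th x₀ y₀ m ∧ InBranch T Th x₀ y₀ m v := by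
  suffices H : ∀ n v, (Th.path v).length ≤ n →
      ∃ m, IsMiniroot T Th x₀ y₀ m ∧ InBranch T Th x₀ y₀ m v by
    intro v; exact H _ v le_rfl
  intro n
  induction n with
  | zero => intro v hv; have := path_len_pos Th v; omega
  | succ n ih =>
    intro v hv
    by_cases hk : Kept T Th x₀ y₀ v
    · obtain ⟨m, hm, hb⟩ := ih (Th.parent v)
        (by have := path_parent_length (Th := Th) hk.1; omega)
      exact ⟨m, hm, inBranch_step hk hb⟩
    · exact ⟨v, hk, inBranch_refl v⟩

lemma tpath_of_inBranch : ∀ {m v : V}, InBranch T Th x₀ y₀ m v →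
    ∃ l, T.path v = T.path m ++ l := by
  suffices H : ∀ n m v, (Th.path v).length ≤ n → InBranch T Th x₀ y₀ m v →
      ∃ l, T.path v = T.path m ++ l by
    intro m v h; exact H _ m v le_rfl h
  intro n
  induction n with
  | zero => intro m v hv _; have := path_len_pos Th v; omega
  | succ n ih =>
    intro m v hv hb
    rcases inBranch_cases hb with rfl | ⟨hkv, hbp⟩
    · exact ⟨[], by simp⟩
    · obtain ⟨l, hl⟩ := ih m (Th.parent v)
        (by have := path_parent_length (Th := Th) hkv.1; omega) hbp
      refine ⟨l ++ [v], ?_⟩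
      rw [T.path_eq v hkv.1, kept_parent_eq hkv, hl, List.append_assoc]

end TreeLemmas

lemma edgeList_mem_split {l : List V} {a b : V} (h : (a, b) ∈ edgeList l) :
    ∃ l₁ l₂, l = l₁ ++ a :: b :: l₂ := by
  induction l with
  | nil => simp [edgeList] at h
  | cons x t ih =>
    cases t with
    | nil => simp [edgeList] at h
    | cons y t' =>
      rw [edgeList_cons_cons] at h
      rcases List.mem_cons.1 h with h | h
      · have h1 : a = x := congrArg Prod.fst h
        have h2 : b = y := congrArg Prod.snd h
        subst h1; subst h2
        exact ⟨[], t', rfl⟩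
      · obtain ⟨l₁, l₂, hl⟩ := ih h
        exact ⟨x :: l₁, l₂, by rw [hl]; rfl⟩

lemma len_congr {l : List V} (h : ∀ p ∈ edgeList l, ω' p.1 p.2 = ω p.1 p.2) :
    len ω' l = len ω l := by
  unfold len
  congr 1
  exact List.map_congr_left h

section MoreTree

variable {T Th T₁ T₂ : RootedTree E s}

lemma kept_congr {v : V} (h : T₂.parent v = T₁.parent v) :
    Kept T T₂ x₀ y₀ v ↔ Kept T T₁ x₀ y₀ v := by
  unfold Kept RootedTree.IsEdge
  rw [h]

lemma delta_const (hω' : ∀ a b, (a, b) ≠ (x₀, y₀) → ω' a b = ω a b)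
    (hT : IsSPT ω T) (hTh : IsSPT ω' Th) :
    ∀ {m v : V}, InBranch T Th x₀ y₀ m v →
      dist E ω' s v - dist E ω s v = dist E ω' s m - dist E ω s m := by
  suffices H : ∀ n m v, (Th.path v).length ≤ n → InBranch T Th x₀ y₀ m v →
      dist E ω' s v - dist E ω s v = dist E ω' s m - dist E ω s m by
    intro m v h; exact H _ m v le_rfl h
  intro n
  induction n with
  | zero => intro m v hv _; have := path_len_pos Th v; omega
  | succ n ih =>
    intro m v hv hb
    rcases inBranch_cases hb with rfl | ⟨hkv, hbp⟩
    · rfl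
    · have h1 := spt_edge_eq hTh hkv.1
      have h2 := spt_edge_eq hT hkv.1
      have hpe : T.parent v = Th.parent v := kept_parent_eq hkv
      have hωeq : ω' (Th.parent v) v = ω (Th.parent v) v := hω' _ _ hkv.2.2
      rw [hpe] at h2
      have h3 := ih m (Th.parent v)
        (by have := path_parent_length (Th := Th) hkv.1; omega) hbp
      linarith

lemma inBranch_y0_x0_false (hpy : Th.parent y₀ = x₀) (hy0s : y₀ ≠ s)
    (h : InBranch T Th x₀ y₀ y₀ x₀) : False := by
  obtain ⟨l, hl, _⟩ := h
  have h1 : Th.path y₀ = Th.path x₀ ++ [y₀] := by rw [Th.path_eq y₀ hy0s, hpy]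
  rw [h1, List.append_assoc] at hl
  have h2 := congrArg List.length hl
  simp only [List.length_append, List.singleton_append, List.length_cons] at h2
  omega

end MoreTree

end Lemmas

/-- The "bad" invariant: the tree uses the modified edge `(x₀, y₀)` even though
`δ(y₀) = 0`, and `x₀` lies in a branch whose miniroot also has `δ = 0`. -/
def BadInvP {E : V → V → Prop} {s : V} (ω ω' : V → V → ℝ) (T : RootedTree E s)
    (x₀ y₀ : V) (Th : RootedTree E s) : Prop :=
  Th.parent y₀ = x₀ ∧ dist E ω' s y₀ = dist E ω s y₀ ∧
    ∃ m, IsMiniroot T Th x₀ y₀ m ∧ InBranch T Th x₀ y₀ m x₀ ∧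
      dist E ω' s m = dist E ω s m

theorem statement_9
    {V : Type*} [Fintype V] [DecidableEq V] (E : V → V → Prop) (ω ω' : V → V → ℝ)
    (s x₀ y₀ : V)
    (hE₀ : E x₀ y₀)
    (hreach : ∀ v, ∃ l, IsWalkFrom E l s v)
    (hω' : ∀ a b, (a, b) ≠ (x₀, y₀) → ω' a b = ω a b)
    (hG : ¬ HasNegCycle E ω)
    (hθ : 0 < ω' x₀ y₀ - ω x₀ y₀)
    (hzero : ¬ HasZeroCycle E ω)
    (T : RootedTree E s) (hT : IsSPT ω T) (he₀ : T.IsEdge x₀ y₀)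
    (T' Tstar : RootedTree E s) (hT' : IsSPT ω' T')
    (hmerge : Relation.ReflTransGen (MergeStep ω ω' T x₀ y₀) T' Tstar)
    (hterm : NoMergeable ω ω' T x₀ y₀ Tstar) :
    IsSPT ω' Tstar ∧
      ∀ T'' : RootedTree E s, IsSPT ω' T'' →
        changedCount T Tstar x₀ y₀ ≤ changedCount T T'' x₀ y₀ := by
  classical
  have hy0s : y₀ ≠ s := he₀.1
  have hTpy : T.parent y₀ = x₀ := he₀.2
  have hle : ∀ a b, ω a b ≤ ω' a b := by
    intro a b
    by_cases h : (a, b) = (x₀, y₀)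
    · have h1 : a = x₀ := congrArg Prod.fst h
      have h2 : b = y₀ := congrArg Prod.snd h
      subst h1; subst h2; linarith
    · rw [hω' a b h]
  have hG' : ¬ HasNegCycle E ω' := by
    rintro ⟨l, hc, hneg⟩
    exact hG ⟨l, hc, lt_of_le_of_lt (len_mono hle l) hneg⟩
  have hdlow : ∀ v, dist E ω s v ≤ dist E ω' s v := dist_mono hG hle hreach
  -- the old tree path to x₀ avoids the modified edge
  have hfree : ∀ p ∈ edgeList (T.path x₀), p ≠ (x₀, y₀) := by
    intro p hp hpe
    subst hpe
    obtain ⟨l₁, l₂, hsplit⟩ := edgeList_mem_split hp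
    have hnd := path_nodup T x₀
    rw [hsplit] at hnd
    have hnd2 : (x₀ :: y₀ :: l₂).Nodup := hnd.of_append_right
    have hx0nm : x₀ ∉ y₀ :: l₂ := (List.nodup_cons.1 hnd2).1
    have hlast := path_last T x₀
    rw [hsplit] at hlast
    obtain ⟨c, hc⟩ : ∃ c, (x₀ :: y₀ :: l₂).getLast? = some c :=
      Option.isSome_iff_exists.1 (by simp)
    rw [List.getLast?_append, hc] at hlast
    simp only [Option.some_or, Option.some_inj] at hlast
    subst hlast
    rw [List.getLast?_cons_cons] at hc
    obtain ⟨ys, hys⟩ := List.getLast?_eq_some_iff.1 hc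
    exact hx0nm (by rw [hys]; simp)
  have hdx0 : dist E ω' s x₀ = dist E ω s x₀ := by
    refine le_antisymm ?_ (hdlow x₀)
    have h1 : dist E ω' s x₀ ≤ len ω' (T.path x₀) :=
      dist_le_len hG' (T.path_isWalkFrom x₀)
    have h2 : len ω' (T.path x₀) = len ω (T.path x₀) :=
      len_congr fun p hp => hω' p.1 p.2 (hfree p hp)
    have h3 := hT x₀
    linarith
  -- preservation of the invariant under merge steps
  have hpres : ∀ (T₁ T₂ : RootedTree E s), MergeStep ω ω' T x₀ y₀ T₁ T₂ →
      (IsSPT ω' T₁ ∨ BadInvP ω ω' T x₀ y₀ T₁) →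
      (IsSPT ω' T₂ ∨ BadInvP ω ω' T x₀ y₀ T₂) := by
    rintro T₁ T₂ ⟨m₁, m₂, u₁, hm₁, hm₂, hne, hbr, hedge, hδ, hupd⟩ hP
    have hm₂s : m₂ ≠ s := hedge.1
    rcases hP with hspt₁ | hbad₁
    · by_cases hm2y : m₂ = y₀
      · -- merging along the modified edge: become bad
        subst hm2y
        have hu₁ : u₁ = x₀ := by rw [← hedge.2, hTpy]
        subst hu₁
        right
        have hδx : dist E ω' s u₁ - dist E ω s u₁
            = dist E ω' s m₁ - dist E ω s m₁ := delta_const hω' hT hspt₁ hbr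
        refine ⟨?_, by linarith, m₁, ?_, ?_, by linarith⟩
        · rw [hupd]; exact Function.update_self _ _ _
        · intro hk
          have hp : T₂.parent m₁ = T₁.parent m₁ := by
            rw [hupd]; exact Function.update_of_ne hne _ _
          exact hm₁ ((kept_congr hp).1 hk)
        · exact inBranch_update hupd hm₂ hbr
      · -- ordinary merge: stay an SPT
        left
        refine isSPT_of_tight hG' ?_
        intro v hv
        by_cases hvm : v = m₂
        · subst hvm
          have hp : T₂.parent v = u₁ := by rw [hupd]; exact Function.update_self _ _ _
          rw [hp]
          have h1 : dist E ω' s u₁ - dist E ω s u₁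
              = dist E ω' s m₁ - dist E ω s m₁ := delta_const hω' hT hspt₁ hbr
          have h2 := spt_edge_eq hT hv
          rw [hedge.2] at h2
          have hne0 : (u₁, v) ≠ (x₀, y₀) := fun h => hm2y (congrArg Prod.snd h)
          have hω : ω' u₁ v = ω u₁ v := hω' _ _ hne0
          linarith
        · have hp : T₂.parent v = T₁.parent v := by
            rw [hupd]; exact Function.update_of_ne hvm _ _
          rw [hp]
          exact spt_edge_eq hspt₁ hv
    · obtain ⟨hpy, hδy, m, hmMini, hmBr, hδm⟩ := hbad₁
      have hmy : m ≠ y₀ := by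
        rintro rfl
        exact inBranch_y0_x0_false hpy hy0s hmBr
      right
      have hpy2 : T₂.parent y₀ = x₀ := by
        by_cases hm2y : m₂ = y₀
        · subst hm2y
          have hu₁ : u₁ = x₀ := by rw [← hedge.2, hTpy]
          rw [hupd, Function.update_self, hu₁]
        · rw [hupd, Function.update_of_ne (Ne.symm hm2y), hpy]
      by_cases hmm : m₂ = m
      · subst hmm
        refine ⟨hpy2, hδy, m₁, ?_, ?_, by linarith⟩
        · intro hk
          have hp : T₂.parent m₁ = T₁.parent m₁ := by
            rw [hupd]; exact Function.update_of_ne hne _ _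
          exact hm₁ ((kept_congr hp).1 hk)
        · have hp2m : T₂.parent m₂ = u₁ := by
            rw [hupd]; exact Function.update_self _ _ _
          have hKm2 : Kept T T₂ x₀ y₀ m₂ := by
            refine ⟨hm₂s, ⟨hm₂s, ?_⟩, ?_⟩
            · rw [hp2m]; exact hedge.2
            · rw [hp2m]
              intro h
              exact hmy (congrArg Prod.snd h)
          have hbu : InBranch T T₂ x₀ y₀ m₁ u₁ := inBranch_update hupd hm₂ hbr
          have hbm : InBranch T T₂ x₀ y₀ m₁ m₂ :=
            inBranch_step hKm2 (by rw [hp2m]; exact hbu)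
          have hbx : InBranch T T₂ x₀ y₀ m₂ x₀ := inBranch_update hupd hm₂ hmBr
          exact inBranch_trans hbm hbx
      · refine ⟨hpy2, hδy, m, ?_, inBranch_update hupd hm₂ hmBr, hδm⟩
        intro hk
        have hp : T₂.parent m = T₁.parent m := by
          rw [hupd]; exact Function.update_of_ne (fun h => hmm h.symm) _ _
        exact hmMini ((kept_congr hp).1 hk)
  -- invariant holds at Tstar
  have hP : IsSPT ω' Tstar ∨ BadInvP ω ω' T x₀ y₀ Tstar := by
    clear hterm
    induction hmerge with
    | refl => exact Or.inl hT'
    | tail hab hbc ih => exact hpres _ _ hbc ih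
  -- terminality rules out the bad invariant
  have hspt : IsSPT ω' Tstar := by
    rcases hP with h | h
    · exact h
    · exfalso
      obtain ⟨hpy, hδy, m, hmMini, hmBr, hδm⟩ := h
      have hminiY : IsMiniroot T Tstar x₀ y₀ y₀ := by
        intro hk
        exact hk.2.2 (by rw [hpy])
      have hmy : m ≠ y₀ := by
        rintro rfl
        exact inBranch_y0_x0_false hpy hy0s hmBr
      exact hterm ⟨m, y₀, x₀, y₀, hmMini, hminiY, hmy, by rw [hδm, hδy]; ring,
        he₀, Or.inl ⟨hmBr, inBranch_refl y₀⟩⟩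
  refine ⟨hspt, ?_⟩
  intro T'' hT''
  -- the canonical set of necessarily-changed vertices
  set Sc : Set V := {v | v ≠ s ∧ (v = y₀ ∨
    dist E ω' s v - dist E ω s v ≠
      dist E ω' s (T.parent v) - dist E ω s (T.parent v))} with hSc
  have hsub1 : {v | v ≠ s ∧ (¬ T.IsEdge (Tstar.parent v) v ∨ (Tstar.parent v, v) = (x₀, y₀))}
      ⊆ Sc := by
    rintro v ⟨hvs, hch⟩
    refine ⟨hvs, ?_⟩
    by_contra hC
    push_neg at hC
    obtain ⟨hvy, hδeq⟩ := hC
    have hNk : ¬ Kept T Tstar x₀ y₀ v := by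
      intro hk
      rcases hch with h | h
      · exact h hk.2.1
      · exact hk.2.2 h
    obtain ⟨m₁, hm₁, hb₁⟩ := miniroot_exists (T := T) (Th := Tstar) (x₀ := x₀) (y₀ := y₀)
      (T.parent v)
    have hm1v : m₁ ≠ v := by
      rintro rfl
      obtain ⟨l, hl⟩ := tpath_of_inBranch hb₁
      have h3 := congrArg List.length (T.path_eq m₁ hvs)
      have h2 := congrArg List.length hl
      simp only [List.length_append, List.length_cons] at h2 h3
      omega
    have hδ1 : dist E ω' s (T.parent v) - dist E ω s (T.parent v)
        = dist E ω' s m₁ - dist E ω s m₁ := delta_const hω' hT hspt hb₁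
    exact hterm ⟨m₁, v, T.parent v, v, hm₁, hNk, hm1v, by linarith,
      ⟨hvs, rfl⟩, Or.inl ⟨hb₁, inBranch_refl v⟩⟩
  have hsub2 : Sc ⊆
      {v | v ≠ s ∧ (¬ T.IsEdge (T''.parent v) v ∨ (T''.parent v, v) = (x₀, y₀))} := by
    rintro v ⟨hvs, hvC⟩
    refine ⟨hvs, ?_⟩
    by_contra h
    push_neg at h
    obtain ⟨hIsE, hne0⟩ := h
    have hpv : T.parent v = T''.parent v := hIsE.2
    rcases hvC with rfl | hδne
    · exact hne0 (by rw [← hpv, hTpy])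
    · apply hδne
      have h1 := spt_edge_eq hT'' hvs
      have h2 := spt_edge_eq hT hvs
      have hωeq : ω' (T''.parent v) v = ω (T''.parent v) v := hω' _ _ hne0
      rw [hpv] at h2 ⊢
      linarith
  unfold changedCount
  calc Set.ncard {v | v ≠ s ∧ (¬ T.IsEdge (Tstar.parent v) v ∨ (Tstar.parent v, v) = (x₀, y₀))}
      ≤ Sc.ncard := Set.ncard_le_ncard hsub1 (Set.toFinite _)
    _ ≤ Set.ncard {v | v ≠ s ∧ (¬ T.IsEdge (T''.parent v) v ∨ (T''.parent v, v) = (x₀, y₀))} :=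
        Set.ncard_le_ncard hsub2 (Set.toFinite _)

end DynSPT
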